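/- arXiv:1310.5605 — 2 statements merged into one kernel-verified Lean document; each statement's English description precedes it below -/
import Mathlib

section
/- Fix λ, ε ∈ ℝ, T > 0, an integer N ≥ 1, and h = T/N. For p ∈ {1,2,3} let φ(y) = (X̄(N;y))^p for y ∈ ℝ^N. Then the level-2 Smolyak sparse grid quadrature built from one-dimensional Gauss–Hermite rules reproduces exactly the Rademacher expectation: E[(X̄(N;ζ))^p] = A(2,N)φ, where ζ = (ζ_1,…,ζ_N) are i.i.d. Rademacher variables. -/
open MeasureTheory ProbabilityTheory Finset

noncomputable section

/-- Evaluation of the probabilists' Hermite polynomial `H_n`. -/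
def hermiteEval (n : ℕ) (y : ℝ) : ℝ := Polynomial.aeval y (Polynomial.hermite n)

/-- One-dimensional quadrature `Q_n ψ = ∑ ψ(y_{n,α}) w_{n,α}` with prescribed nodes and weights
(in particular `Q_0 = 0`). -/
def ghQuad (node weight : (n : ℕ) → Fin n → ℝ) (n : ℕ) (ψ : ℝ → ℝ) : ℝ :=
  ∑ α : Fin n, ψ (node n α) * weight n α

/-- `node`/`weight` are the Gauss–Hermite nodes (the increasing enumeration of the `n` roots of
the probabilists' Hermite polynomial `H_n`) together with the Gauss–Hermite weights
`w_{n,α} = n! / (n² H_{n-1}(y_{n,α})²)`. -/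
def IsGaussHermite (node weight : (n : ℕ) → Fin n → ℝ) : Prop :=
  (∀ n : ℕ, StrictMono (node n)) ∧
  (∀ (n : ℕ) (α : Fin n), hermiteEval n (node n α) = 0) ∧
  (∀ (n : ℕ) (α : Fin n),
    weight n α = (Nat.factorial n : ℝ) / ((n : ℝ) ^ 2 * hermiteEval (n - 1) (node n α) ^ 2))

/-- Standard Gaussian integral `I₁ ψ = (2π)^{-1/2} ∫ ψ(y) e^{-y²/2} dy`. -/
def gaussInt (ψ : ℝ → ℝ) : ℝ := ∫ y, ψ y ∂(gaussianReal 0 1)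

/-- `N`-dimensional standard Gaussian integral `I_N φ`. -/
def gaussIntN (N : ℕ) (φ : (Fin N → ℝ) → ℝ) : ℝ :=
  ∫ y, φ y ∂(MeasureTheory.Measure.pi fun _ : Fin N => gaussianReal 0 1)

/-- Apply a one-dimensional functional `T` in the `k`-th coordinate of a function of `N`
variables. -/
def applyCoord {N : ℕ} (T : (ℝ → ℝ) → ℝ) (k : Fin N) (φ : (Fin N → ℝ) → ℝ) :
    (Fin N → ℝ) → ℝ :=
  fun y => T fun t => φ (Function.update y k t)

/-- Tensor product `T_1 ⊗ ⋯ ⊗ T_N` of one-dimensional functionals, applied to `φ`. -/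
def tensorApply {N : ℕ} (T : Fin N → ((ℝ → ℝ) → ℝ)) (φ : (Fin N → ℝ) → ℝ) : ℝ :=
  ((List.finRange N).foldr (fun k ψ => applyCoord (T k) k ψ) φ) fun _ => 0

/-- The level-`L` Smolyak sparse grid quadrature
`A(L,d)φ = ∑_{d ≤ |i| ≤ L+d-1} (Q_{i_1}-Q_{i_1-1}) ⊗ ⋯ ⊗ (Q_{i_d}-Q_{i_d-1}) φ`
(each `i_k ≥ 1`; note that the constraints force `i_k ≤ L`, so summing over
`i : Fin d → Fin (L+2)` loses no terms). -/
def smolyak (node weight : (n : ℕ) → Fin n → ℝ) (L d : ℕ) (φ : (Fin d → ℝ) → ℝ) : ℝ :=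
  ∑ i : Fin d → Fin (L + 2),
    if (∀ k, 1 ≤ (i k : ℕ)) ∧ d ≤ (∑ k, (i k : ℕ)) ∧ (∑ k, (i k : ℕ)) ≤ L + d - 1 then
      tensorApply
        (fun k ψ => ghQuad node weight (i k : ℕ) ψ - ghQuad node weight ((i k : ℕ) - 1) ψ) φ
    else 0

/-- The Peano kernel `Γ_{y,γ}(z) = (z-y)^{γ-1}/(γ-1)!` for `z ≥ y`, `0` otherwise. -/
def peanoKernel (y : ℝ) (γ : ℕ) : ℝ → ℝ :=
  fun z => if y ≤ z then (z - y) ^ (γ - 1) / (Nat.factorial (γ - 1) : ℝ) else 0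

/-- The Gauss–Hermite quadrature error on the Peano kernel, `R_{n,γ}(Γ_{y,γ})`. -/
def ghErr (node weight : (n : ℕ) → Fin n → ℝ) (n γ : ℕ) (y : ℝ) : ℝ :=
  ghQuad node weight n (peanoKernel y γ) - gaussInt (peanoKernel y γ)

/-- Euler scheme `X̄(N;y) = (1+λh)^N + ∑_{j=1}^N (1+λh)^{N-j} ε √h y_j` for
`dX = λX dt + ε dw`, `X(0) = 1`. -/
def eulerX (lam eps h : ℝ) (N : ℕ) (y : Fin N → ℝ) : ℝ :=
  (1 + lam * h) ^ N +
    ∑ j : Fin N, (1 + lam * h) ^ (N - ((j : ℕ) + 1)) * eps * Real.sqrt h * y j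

/-- Expectation over `d` i.i.d. Rademacher variables: `E g(ζ) = 2^{-d} ∑_{s ∈ {-1,1}^d} g(s)`. -/
def radExp (d : ℕ) (g : (Fin d → ℝ) → ℝ) : ℝ :=
  (1 / 2 ^ d) * ∑ s : Fin d → Bool, g fun k => if s k then 1 else -1

/-- Expectation over `d` i.i.d. variables with `P(ζ = ±√3) = 1/6`, `P(ζ = 0) = 2/3`. -/
def threePointExp (d : ℕ) (g : (Fin d → ℝ) → ℝ) : ℝ :=
  ∑ s : Fin d → Fin 3,
    (∏ k, ![(1 : ℝ) / 6, 2 / 3, 1 / 6] (s k)) *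
      g fun k => ![Real.sqrt 3, 0, -Real.sqrt 3] (s k)

/-- Partial derivative in the `k`-th coordinate. -/
def pderivCoord {d : ℕ} (k : Fin d) (φ : (Fin d → ℝ) → ℝ) : (Fin d → ℝ) → ℝ :=
  fun y => deriv (fun t => φ (Function.update y k t)) (y k)

/-- Mixed partial derivative `D^α` for a multi-index `α`. -/
def mderiv {d : ℕ} (α : Fin d → ℕ) (φ : (Fin d → ℝ) → ℝ) : (Fin d → ℝ) → ℝ :=
  (List.finRange d).foldr (fun k ψ => (pderivCoord k)^[α k] ψ) φ

end

/-! The Gauss–Hermite rules used at level two are `Q₁ψ = ψ(0)` and `Q₂ψ = (ψ(-1) + ψ(1))/2`, and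
the only admissible multi-indices are `(1,…,1)` and `(1,…,2,…,1)`, so `A(2,N)` is the linear
functional `φ ↦ φ(0) + ∑ₖ ((φ(-eₖ) + φ(eₖ))/2 - φ(0))`. The Euler approximation is affine,
`X̄(N;y) = a + S(y)` with `S(y) = ∑ⱼ bⱼ yⱼ`, so by the binomial expansion of `(a + S)^p` it suffices
that `A(2,N)` and the Rademacher expectation agree on `S^m` for `m ≤ 3`: both give `1` for `m = 0`,
`0` for odd `m` since `S` is odd, and `∑ⱼ bⱼ²` for `m = 2` since the `ζⱼ` are orthonormal. -/

lemma hermiteEval_zero (y : ℝ) : hermiteEval 0 y = 1 := by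
  simp [hermiteEval]

lemma hermiteEval_one (y : ℝ) : hermiteEval 1 y = y := by
  simp [hermiteEval]

lemma hermiteEval_two (y : ℝ) : hermiteEval 2 y = y ^ 2 - 1 := by
  simp [hermiteEval, Polynomial.hermite_succ, sq]

namespace IsGaussHermite

variable {node weight : (n : ℕ) → Fin n → ℝ}

lemma ghQuad_one (hGH : IsGaussHermite node weight) (ψ : ℝ → ℝ) :
    ghQuad node weight 1 ψ = ψ 0 := by
  have hnode : node 1 0 = 0 := by simpa [hermiteEval_one] using hGH.2.1 1 0
  have hweight : weight 1 0 = 1 := by simp [hGH.2.2 1 0, hermiteEval_zero]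
  simp [ghQuad, hnode, hweight]

lemma ghQuad_two (hGH : IsGaussHermite node weight) (ψ : ℝ → ℝ) :
    ghQuad node weight 2 ψ = (ψ (-1) + ψ 1) / 2 := by
  have hsq (α : Fin 2) : node 2 α ^ 2 = 1 := by
    linarith [hermiteEval_two (node 2 α) ▸ hGH.2.1 2 α]
  have hlt : node 2 0 < node 2 1 := hGH.1 2 Fin.zero_lt_one
  have hsum : node 2 0 + node 2 1 = 0 := by
    have : (node 2 1 - node 2 0) * (node 2 0 + node 2 1) = 0 := by
      linear_combination hsq 1 - hsq 0
    exact (mul_eq_zero.mp this).resolve_left (sub_ne_zero.mpr hlt.ne')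
  have h0 : node 2 0 = -1 := by nlinarith [hsq 0]
  have h1 : node 2 1 = 1 := by linarith
  have hweight (α : Fin 2) : weight 2 α = 1 / 2 := by
    rw [hGH.2.2 2 α, hermiteEval_one, hsq]
    norm_num [Nat.factorial]
  simp only [ghQuad, Fin.sum_univ_two, h0, h1, hweight]
  ring

end IsGaussHermite

section TensorApply

variable {N : ℕ} (T : Fin N → (ℝ → ℝ) → ℝ) (φ : (Fin N → ℝ) → ℝ)

lemma ite_mem_update_zero_eq_ite_mem_cons (k : Fin N) (l : List (Fin N)) (y : Fin N → ℝ) :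
    (fun i => if i ∈ l then 0 else Function.update y k 0 i)
      = fun i => if i ∈ k :: l then 0 else y i := by
  ext i
  by_cases hi : i = k <;> by_cases hl : i ∈ l <;> simp [hi, hl]

lemma foldr_applyCoord_of_eval_zero (l : List (Fin N)) (hT : ∀ k ∈ l, ∀ ψ, T k ψ = ψ 0)
    (y : Fin N → ℝ) :
    l.foldr (fun k ψ => applyCoord (T k) k ψ) φ y = φ fun i => if i ∈ l then 0 else y i := by
  induction l generalizing y with
  | nil => simp
  | cons k l ih =>
    simp only [List.foldr_cons, applyCoord, hT k List.mem_cons_self]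
    rw [ih (fun k' hk' => hT k' (List.mem_cons_of_mem _ hk')), ite_mem_update_zero_eq_ite_mem_cons]

lemma foldr_applyCoord_of_eval_zero_of_ne (k₀ : Fin N) (l : List (Fin N)) (hl : l.Nodup)
    (hk₀ : k₀ ∈ l) (hT : ∀ k ≠ k₀, ∀ ψ, T k ψ = ψ 0) (y : Fin N → ℝ) :
    l.foldr (fun k ψ => applyCoord (T k) k ψ) φ y
      = T k₀ fun t => φ (Function.update (fun i => if i ∈ l then 0 else y i) k₀ t) := by
  induction l generalizing y with
  | nil => cases hk₀
  | cons k l ih =>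
    obtain ⟨hkl, hl⟩ := List.nodup_cons.mp hl
    simp only [List.foldr_cons, applyCoord]
    by_cases hk : k = k₀
    · subst hk
      congr 1
      ext t
      rw [foldr_applyCoord_of_eval_zero T φ l (fun k' hk' => hT k' (ne_of_mem_of_not_mem hk' hkl))]
      congr 1
      ext i
      by_cases hi : i = k <;> by_cases hil : i ∈ l <;> simp [hi, hil, hkl]
    · rw [hT k hk, ih hl ((List.mem_cons.mp hk₀).resolve_left (Ne.symm hk)),
        ite_mem_update_zero_eq_ite_mem_cons]

lemma tensorApply_of_eval_zero (hT : ∀ k ψ, T k ψ = ψ 0) : tensorApply T φ = φ 0 := by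
  rw [tensorApply, foldr_applyCoord_of_eval_zero T φ _ fun k _ => hT k]
  simp only [List.mem_finRange, if_true]
  rfl

lemma tensorApply_of_eval_zero_of_ne (k₀ : Fin N) (hT : ∀ k ≠ k₀, ∀ ψ, T k ψ = ψ 0) :
    tensorApply T φ = T k₀ fun t => φ (Pi.single k₀ t) := by
  rw [tensorApply, foldr_applyCoord_of_eval_zero_of_ne T φ k₀ _ (List.nodup_finRange N)
    (List.mem_finRange k₀) hT]
  simp only [List.mem_finRange, if_true]
  rfl

end TensorApply

lemma Fintype.eq_zero_or_eq_single_of_sum_le_one {ι : Type*} [Fintype ι] [DecidableEq ι]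
    {e : ι → ℕ} (h : ∑ k, e k ≤ 1) : e = 0 ∨ ∃ k, e = Pi.single k 1 := by
  by_cases h0 : ∀ k, e k = 0
  · exact Or.inl (funext h0)
  obtain ⟨k, hk⟩ := not_forall.mp h0
  refine Or.inr ⟨k, funext fun j => ?_⟩
  by_cases hj : j = k
  · subst hj
    have := Finset.single_le_sum (fun i _ => Nat.zero_le (e i)) (Finset.mem_univ j)
    simp only [Pi.single_eq_same]
    omega
  · have := Finset.sum_le_sum_of_subset (f := e) (Finset.subset_univ {j, k})
    rw [Finset.sum_pair hj] at this
    simp only [Pi.single_eq_of_ne hj]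
    omega

lemma LinearMap.apply_add_pow_eq_of_apply_pow_eq {α R M : Type*} [CommSemiring R]
    [AddCommMonoid M] [Module R M] (F G : (α → R) →ₗ[R] M) (c : R) (f : α → R) {p : ℕ}
    (h : ∀ m ≤ p, F (f ^ m) = G (f ^ m)) :
    F (fun x => (c + f x) ^ p) = G (fun x => (c + f x) ^ p) := by
  have hbinom : (fun x => (c + f x) ^ p)
      = ∑ m ∈ Finset.range (p + 1), (c ^ (p - m) * p.choose m) • f ^ m := by
    ext x
    simp only [add_comm c, add_pow, Finset.sum_apply, Pi.smul_apply, Pi.pow_apply, smul_eq_mul]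
    exact Finset.sum_congr rfl fun _ _ => by ring
  simp only [hbinom, map_sum, map_smul]
  exact Finset.sum_congr rfl fun m hm => by rw [h m (Finset.mem_range_succ_iff.mp hm)]

section SmolyakTwo

variable {N : ℕ}

lemma smolyak_two_index_iff (i : Fin N → Fin 4) :
    ((∀ k, 1 ≤ (i k : ℕ)) ∧ N ≤ ∑ k, (i k : ℕ) ∧ ∑ k, (i k : ℕ) ≤ 2 + N - 1)
      ↔ i = 1 ∨ ∃ k, i = Function.update (1 : Fin N → Fin 4) k 2 := by
  constructor
  · rintro ⟨hpos, -, hle⟩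
    have hsum : ∑ k, ((i k : ℕ) - 1) + N = ∑ k, (i k : ℕ) := by
      have := Finset.sum_congr rfl fun k (_ : k ∈ Finset.univ) => Nat.sub_add_cancel (hpos k)
      simpa only [Finset.sum_add_distrib, Finset.sum_const, Finset.card_univ, Fintype.card_fin,
        smul_eq_mul, mul_one] using this
    rcases Fintype.eq_zero_or_eq_single_of_sum_le_one (e := fun k => (i k : ℕ) - 1) (by omega)
      with he | ⟨k, he⟩
    · refine Or.inl (funext fun j => Fin.ext ?_)
      have hj : (i j : ℕ) - 1 = 0 := congrFun he j
      show (i j : ℕ) = 1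
      have := hpos j
      omega
    · refine Or.inr ⟨k, funext fun j => Fin.ext ?_⟩
      have hj : (i j : ℕ) - 1 = (Pi.single k 1 : Fin N → ℕ) j := congrFun he j
      by_cases hjk : j = k
      · subst hjk
        rw [Pi.single_eq_same] at hj
        rw [Function.update_self]
        show (i j : ℕ) = 2
        omega
      · rw [Pi.single_eq_of_ne hjk] at hj
        rw [Function.update_of_ne hjk]
        show (i j : ℕ) = 1
        have := hpos j
        omega
  · rintro (rfl | ⟨k, rfl⟩)
    · simp
    · have hsum : ∑ j, ((Function.update (1 : Fin N → Fin 4) k 2 j : Fin 4) : ℕ) = N + 1 := by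
        have := k.pos
        simp only [Function.apply_update (fun _ => Fin.val),
          Finset.sum_update_of_mem (Finset.mem_univ k), Pi.one_apply, Finset.sum_const,
          Finset.card_sdiff, Finset.card_univ, Fintype.card_fin, Finset.inter_univ,
          Finset.card_singleton, smul_eq_mul]
        omega
      refine ⟨fun j => ?_, by omega, by omega⟩
      by_cases hj : j = k
      · subst hj; simp
      · simp [Function.update_of_ne hj]

noncomputable def smolyakTwoRule (N : ℕ) : ((Fin N → ℝ) → ℝ) →ₗ[ℝ] ℝ where
  toFun φ := φ 0 + ∑ k, ((φ (Pi.single k (-1)) + φ (Pi.single k 1)) / 2 - φ 0)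
  map_add' φ ψ := by
    rw [add_add_add_comm, ← Finset.sum_add_distrib]
    simp only [Pi.add_apply]
    congr 1
    exact Finset.sum_congr rfl fun _ _ => by ring
  map_smul' c φ := by
    rw [RingHom.id_apply, smul_eq_mul, mul_add, Finset.mul_sum]
    simp only [Pi.smul_apply, smul_eq_mul]
    congr 1
    exact Finset.sum_congr rfl fun _ _ => by ring

lemma smolyakTwoRule_apply (φ : (Fin N → ℝ) → ℝ) :
    smolyakTwoRule N φ = φ 0 + ∑ k, ((φ (Pi.single k (-1)) + φ (Pi.single k 1)) / 2 - φ 0) :=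
  rfl

lemma smolyakTwoRule_eq_zero_of_odd {φ : (Fin N → ℝ) → ℝ} (hφ : ∀ y, φ (-y) = -φ y) :
    smolyakTwoRule N φ = 0 := by
  have h0 : φ 0 = 0 := by linarith [neg_zero (G := Fin N → ℝ) ▸ hφ 0]
  simp [smolyakTwoRule_apply, h0, Pi.single_neg, hφ]

lemma smolyak_two_eq {node weight : (n : ℕ) → Fin n → ℝ} (hGH : IsGaussHermite node weight)
    (φ : (Fin N → ℝ) → ℝ) : smolyak node weight 2 N φ = smolyakTwoRule N φ := by
  have hdiff₁ (ψ : ℝ → ℝ) : ghQuad node weight 1 ψ - ghQuad node weight 0 ψ = ψ 0 := by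
    rw [hGH.ghQuad_one]
    simp [ghQuad]
  have hdiff₂ (ψ : ℝ → ℝ) :
      ghQuad node weight 2 ψ - ghQuad node weight 1 ψ = (ψ (-1) + ψ 1) / 2 - ψ 0 := by
    rw [hGH.ghQuad_two, hGH.ghQuad_one]
  have hindex : Finset.univ.filter (fun i : Fin N → Fin 4 =>
        (∀ k, 1 ≤ (i k : ℕ)) ∧ N ≤ ∑ k, (i k : ℕ) ∧ ∑ k, (i k : ℕ) ≤ 2 + N - 1)
      = insert 1 (Finset.univ.image fun k => Function.update (1 : Fin N → Fin 4) k 2) := by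
    ext i
    rw [Finset.mem_filter, smolyak_two_index_iff]
    simp [eq_comm]
  rw [smolyak, ← Finset.sum_filter, hindex, Finset.sum_insert, Finset.sum_image]
  · rw [smolyakTwoRule_apply]
    congr 1
    · exact tensorApply_of_eval_zero _ _ fun _ => hdiff₁
    refine Finset.sum_congr rfl fun k _ => ?_
    refine (tensorApply_of_eval_zero_of_ne _ _ k fun j hj => ?_).trans ?_
    · rw [Function.update_of_ne hj]
      exact hdiff₁
    · rw [Function.update_self, ← Pi.single_zero k]
      exact hdiff₂ _
  · intro k _ j _ hkj
    by_contra hne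
    simpa [Function.update_of_ne (Ne.symm hne)] using congrFun hkj j
  · simp only [Finset.mem_image, Finset.mem_univ, true_and, not_exists]
    intro k hk
    simpa using congrFun hk k

end SmolyakTwo

section Rademacher

variable {N : ℕ}

lemma radExp_sum {ι : Type*} (s : Finset ι) (g : ι → (Fin N → ℝ) → ℝ) :
    radExp N (fun y => ∑ i ∈ s, g i y) = ∑ i ∈ s, radExp N (g i) := by
  simp only [radExp, Finset.mul_sum]
  exact Finset.sum_comm

lemma radExp_const_mul (c : ℝ) (g : (Fin N → ℝ) → ℝ) :
    radExp N (fun y => c * g y) = c * radExp N g := by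
  simp only [radExp, ← Finset.mul_sum]
  ring

noncomputable def radExpLinearMap (N : ℕ) : ((Fin N → ℝ) → ℝ) →ₗ[ℝ] ℝ where
  toFun := radExp N
  map_add' φ ψ := by
    simp only [radExp, Pi.add_apply, Finset.sum_add_distrib, mul_add]
  map_smul' c φ := radExp_const_mul c φ

lemma radExp_eq_zero_of_odd {g : (Fin N → ℝ) → ℝ} (hg : ∀ y, g (-y) = -g y) :
    radExp N g = 0 := by
  unfold radExp
  set sign : (Fin N → Bool) → Fin N → ℝ := fun s k => if s k then 1 else -1
  have hflip : ∑ s, g (sign s) = ∑ s, g (-sign s) :=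
    (Fintype.sum_equiv (Equiv.piCongrRight fun _ => Equiv.boolNot) _ _ fun s => by
      congr 1; ext k; cases h : s k <;> simp [sign, Equiv.boolNot, h]).symm
  simp only [hg, Finset.sum_neg_distrib] at hflip
  rw [show ∑ s, g (sign s) = 0 by linarith, mul_zero]

lemma radExp_prod (f : Fin N → ℝ → ℝ) :
    radExp N (fun y => ∏ j, f j (y j)) = ∏ j, (f j 1 + f j (-1)) / 2 := by
  simp only [radExp]
  rw [← Fintype.prod_sum fun j (b : Bool) => f j (if b then 1 else -1),
    Finset.prod_div_distrib, Finset.prod_const, Finset.card_univ, Fintype.card_fin]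
  simp only [Fintype.sum_bool, if_true, Bool.false_eq_true, if_false]
  ring

lemma radExp_coord_mul_coord (j k : Fin N) :
    radExp N (fun y => y j * y k) = if j = k then 1 else 0 := by
  have hprod : (fun y : Fin N → ℝ => y j * y k)
      = fun y => ∏ i, (if i = j then y i else 1) * (if i = k then y i else 1) := by
    ext y
    rw [Finset.prod_mul_distrib, Finset.prod_ite_eq', Finset.prod_ite_eq']
    simp
  rw [hprod, radExp_prod fun i t => (if i = j then t else 1) * (if i = k then t else 1)]
  split_ifs with hjk
  · subst hjk
    refine Finset.prod_eq_one fun i _ => ?_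
    split_ifs <;> norm_num
  · exact Finset.prod_eq_zero (Finset.mem_univ j) (by simp [hjk])

lemma radExp_linear_sq (b : Fin N → ℝ) :
    radExp N (fun y => (∑ j, b j * y j) ^ 2) = ∑ j, b j ^ 2 := by
  have hexpand : (fun y : Fin N → ℝ => (∑ j, b j * y j) ^ 2)
      = fun y => ∑ j, ∑ k, b j * b k * (y j * y k) := by
    ext y
    rw [sq, Finset.sum_mul_sum]
    exact Finset.sum_congr rfl fun _ _ => Finset.sum_congr rfl fun _ _ => by ring
  rw [hexpand]
  simp only [radExp_sum, radExp_const_mul, radExp_coord_mul_coord, mul_ite, mul_one, mul_zero,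
    Finset.sum_ite_eq, Finset.mem_univ, if_true, sq]

lemma radExp_linear_pow_eq_smolyakTwoRule (b : Fin N → ℝ) {m : ℕ} (hm : m ≤ 3) :
    radExp N (fun y => (∑ j, b j * y j) ^ m)
      = smolyakTwoRule N (fun y => (∑ j, b j * y j) ^ m) := by
  have hodd {n : ℕ} (hn : Odd n) (y : Fin N → ℝ) :
      (∑ j, b j * (-y) j) ^ n = -(∑ j, b j * y j) ^ n := by
    simp only [Pi.neg_apply, mul_neg, Finset.sum_neg_distrib, hn.neg_pow]
  interval_cases m
  · simp [radExp, smolyakTwoRule_apply]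
  · rw [radExp_eq_zero_of_odd (hodd odd_one), smolyakTwoRule_eq_zero_of_odd (hodd odd_one)]
  · simp [radExp_linear_sq, smolyakTwoRule_apply, Pi.single_apply]
  · rw [radExp_eq_zero_of_odd (hodd (by decide)), smolyakTwoRule_eq_zero_of_odd (hodd (by decide))]

lemma radExp_affine_pow_eq_smolyakTwoRule (a : ℝ) (b : Fin N → ℝ) {p : ℕ} (hp : p ≤ 3) :
    radExp N (fun y => (a + ∑ j, b j * y j) ^ p)
      = smolyakTwoRule N (fun y => (a + ∑ j, b j * y j) ^ p) :=
  (radExpLinearMap N).apply_add_pow_eq_of_apply_pow_eq (smolyakTwoRule N) a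
    (fun y => ∑ j, b j * y j) fun _ hm => radExp_linear_pow_eq_smolyakTwoRule b (hm.trans hp)

end Rademacher

theorem smolyak_exact_low_moments_general (node weight : (n : ℕ) → Fin n → ℝ)
    (hGH : IsGaussHermite node weight) (lam eps T : ℝ)
    (N : ℕ) (p : ℕ) (hp : p = 1 ∨ p = 2 ∨ p = 3) :
    radExp N (fun s => eulerX lam eps (T / N) N s ^ p) =
      smolyak node weight 2 N (fun y => eulerX lam eps (T / N) N y ^ p) := by
  rw [smolyak_two_eq hGH]
  exact radExp_affine_pow_eq_smolyakTwoRule ((1 + lam * (T / N)) ^ N)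
    (fun j => (1 + lam * (T / N)) ^ (N - ((j : ℕ) + 1)) * eps * Real.sqrt (T / N)) (by omega)

/-- for `p ∈ {1,2,3}` and `φ(y) = X̄(N;y)^p`, the level-2 Smolyak sparse grid
quadrature reproduces the Rademacher expectation exactly:
`E[(X̄(N;ζ))^p] = A(2,N)φ`. -/
theorem smolyak_exact_low_moments (node weight : (n : ℕ) → Fin n → ℝ)
    (hGH : IsGaussHermite node weight) (lam eps T : ℝ) (hT : 0 < T)
    (N : ℕ) (hN : 1 ≤ N) (p : ℕ) (hp : p = 1 ∨ p = 2 ∨ p = 3) :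
    radExp N (fun s => eulerX lam eps (T / N) N s ^ p) =
      smolyak node weight 2 N (fun y => eulerX lam eps (T / N) N y ^ p) :=
  smolyak_exact_low_moments_general node weight hGH lam eps T N p hp
end

section
/- Assume there exist c > 0 and β ∈ (0,1) such that |R_{n,γ}(Γ_{y,γ})| ≤ (c/√(2π)) n^{−γ/2} e^{−βy²/2} for all n ≥ 1, 1 ≤ γ ≤ 2n, y ∈ ℝ. Let L ≥ 1, l ≥ 2 and i_1,…,i_l be positive integers with i_1 + ⋯ + i_l = L + l − 1, let G = {m : 1 ≤ m ≤ l−1, i_m > 1}, and define 𝓡(y_1,…,y_l) = − R_{i_l,2i_l}(Γ_{y_l,2i_l}) · ∏_{n∈G} [ R_{i_n,2i_n−2}(Γ_{y_n,2i_n−2}) − R_{i_n−1,2i_n−2}(Γ_{y_n,2i_n−2}) ]. Then |𝓡(y_1,…,y_l)| ≤ ((3c/2)^{#G+1}/(2π)^{(#G+1)/2}) · exp( −β( Σ_{n∈G} y_n² + y_l² )/2 ), where #G is the cardinality of G. -/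
open MeasureTheory ProbabilityTheory Finset

/-!
Each factor of the product is bounded separately by the assumed error estimate. For `n ≥ 2` the
difference `R_{n,2n-2} - R_{n-1,2n-2}` picks up the rates `n^{-(n-1)} + (n-1)^{-(n-1)} ≤ 1/2 + 1`,
and the last factor the rate `i_l^{-i_l} ≤ 1 ≤ 3/2`; so every factor is at most
`(3c/2)(2π)^{-1/2} e^{-βy²/2}`, and the Gaussian weights multiply to the exponential of the summed
exponents.
-/

open Real

lemma rpow_neg_half_le_half {x t : ℝ} (hx : 2 ≤ x) (ht : 2 ≤ t) : x ^ (-t / 2) ≤ 1 / 2 :=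
  calc x ^ (-t / 2) ≤ x ^ (-1 : ℝ) := rpow_le_rpow_of_exponent_le (by linarith) (by linarith)
    _ = x⁻¹ := rpow_neg_one x
    _ ≤ 1 / 2 := by rw [one_div]; exact inv_anti₀ (by norm_num) hx

lemma sqrt_pow_eq_rpow {x : ℝ} (hx : 0 ≤ x) (k : ℕ) : √x ^ k = x ^ ((k : ℝ) / 2) := by
  rw [rpow_div_two_eq_sqrt _ hx, rpow_natCast]

lemma natCast_rpow_add_pred_rpow_le {n : ℕ} (hn : 2 ≤ n) :
    (n : ℝ) ^ (-((2 * n - 2 : ℕ) : ℝ) / 2) + ((n - 1 : ℕ) : ℝ) ^ (-((2 * n - 2 : ℕ) : ℝ) / 2)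
      ≤ 3 / 2 := by
  have hγ : (2 : ℝ) ≤ ((2 * n - 2 : ℕ) : ℝ) := by exact_mod_cast (by omega : 2 ≤ 2 * n - 2)
  have h₁ : (n : ℝ) ^ (-((2 * n - 2 : ℕ) : ℝ) / 2) ≤ 1 / 2 :=
    rpow_neg_half_le_half (by exact_mod_cast hn) hγ
  have h₂ : ((n - 1 : ℕ) : ℝ) ^ (-((2 * n - 2 : ℕ) : ℝ) / 2) ≤ 1 :=
    rpow_le_one_of_one_le_of_nonpos (by exact_mod_cast (by omega : 1 ≤ n - 1)) (by linarith)
  linarith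

lemma abs_mul_prod_le_pow_succ_mul_exp {ι : Type*} (s : Finset ι) {a C u : ℝ} {b v : ι → ℝ}
    (ha : |a| ≤ C * exp u) (hb : ∀ m ∈ s, |b m| ≤ C * exp (v m)) :
    |a * ∏ m ∈ s, b m| ≤ C ^ (#s + 1) * exp (∑ m ∈ s, v m + u) := by
  rw [abs_mul, abs_prod]
  calc |a| * ∏ m ∈ s, |b m| ≤ (C * exp u) * ∏ m ∈ s, C * exp (v m) :=
        mul_le_mul ha (prod_le_prod (fun _ _ => abs_nonneg _) hb)
          (prod_nonneg fun _ _ => abs_nonneg _) ((abs_nonneg a).trans ha)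
    _ = C ^ (#s + 1) * exp (∑ m ∈ s, v m + u) := by
        rw [prod_mul_distrib, prod_const, ← exp_sum, exp_add]
        ring

def PeanoErrBound (node weight : (n : ℕ) → Fin n → ℝ) (c β : ℝ) : Prop :=
  ∀ n : ℕ, 1 ≤ n → ∀ γ : ℕ, 1 ≤ γ → γ ≤ 2 * n → ∀ y : ℝ,
    |ghErr node weight n γ y| ≤ c / √(2 * π) * (n : ℝ) ^ (-(γ : ℝ) / 2) * exp (-β * y ^ 2 / 2)

namespace PeanoErrBound

variable {node weight : (n : ℕ) → Fin n → ℝ} {c β : ℝ}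

lemma abs_ghErr_sub_pred_le (hR : PeanoErrBound node weight c β) (hc : 0 ≤ c) {n : ℕ}
    (hn : 2 ≤ n) (y : ℝ) :
    |ghErr node weight n (2 * n - 2) y - ghErr node weight (n - 1) (2 * n - 2) y| ≤
      3 * c / 2 / √(2 * π) * exp (-β * y ^ 2 / 2) :=
  calc _ ≤ |ghErr node weight n (2 * n - 2) y| + |ghErr node weight (n - 1) (2 * n - 2) y| :=
        abs_sub _ _
    _ ≤ c / √(2 * π) * (n : ℝ) ^ (-((2 * n - 2 : ℕ) : ℝ) / 2) * exp (-β * y ^ 2 / 2) +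
          c / √(2 * π) * ((n - 1 : ℕ) : ℝ) ^ (-((2 * n - 2 : ℕ) : ℝ) / 2) *
            exp (-β * y ^ 2 / 2) :=
        add_le_add (hR n (by omega) _ (by omega) (by omega) y)
          (hR (n - 1) (by omega) _ (by omega) (by omega) y)
    _ = c / √(2 * π) * ((n : ℝ) ^ (-((2 * n - 2 : ℕ) : ℝ) / 2) +
          ((n - 1 : ℕ) : ℝ) ^ (-((2 * n - 2 : ℕ) : ℝ) / 2)) * exp (-β * y ^ 2 / 2) := by ring
    _ ≤ c / √(2 * π) * (3 / 2) * exp (-β * y ^ 2 / 2) := by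
        gcongr; exact natCast_rpow_add_pred_rpow_le hn
    _ = 3 * c / 2 / √(2 * π) * exp (-β * y ^ 2 / 2) := by ring

lemma abs_ghErr_two_mul_le (hR : PeanoErrBound node weight c β) (hc : 0 ≤ c) {n : ℕ}
    (hn : 1 ≤ n) (y : ℝ) :
    |ghErr node weight n (2 * n) y| ≤ 3 * c / 2 / √(2 * π) * exp (-β * y ^ 2 / 2) :=
  calc _ ≤ c / √(2 * π) * (n : ℝ) ^ (-((2 * n : ℕ) : ℝ) / 2) * exp (-β * y ^ 2 / 2) :=
        hR n hn _ (by omega) le_rfl y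
    _ ≤ c / √(2 * π) * (3 / 2) * exp (-β * y ^ 2 / 2) := by
        gcongr
        calc _ ≤ (1 : ℝ) := rpow_le_one_of_one_le_of_nonpos (by exact_mod_cast hn)
                (div_nonpos_of_nonpos_of_nonneg (neg_nonpos.mpr (Nat.cast_nonneg _)) zero_le_two)
          _ ≤ 3 / 2 := by norm_num
    _ = 3 * c / 2 / √(2 * π) * exp (-β * y ^ 2 / 2) := by ring

end PeanoErrBound

/-- bound on the product `𝓡` of Gauss–Hermite Peano-kernel errors appearing in
the sparse grid error analysis. -/
theorem peano_kernel_product_bound (node weight : (n : ℕ) → Fin n → ℝ)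
    (c β : ℝ) (hc : 0 < c)
    (hR : ∀ n : ℕ, 1 ≤ n → ∀ γ : ℕ, 1 ≤ γ → γ ≤ 2 * n → ∀ y : ℝ,
      |ghErr node weight n γ y| ≤
        c / Real.sqrt (2 * Real.pi) * (n : ℝ) ^ (-(γ : ℝ) / 2) * Real.exp (-β * y ^ 2 / 2))
    (l : ℕ) (hl : 2 ≤ l) (i : Fin l → ℕ) (hi1 : ∀ j, 1 ≤ i j) (y : Fin l → ℝ) :
    |(-(ghErr node weight (i ⟨l - 1, by omega⟩) (2 * i ⟨l - 1, by omega⟩) (y ⟨l - 1, by omega⟩))) *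
        ∏ m ∈ Finset.univ.filter (fun m : Fin l => (m : ℕ) + 1 < l ∧ 1 < i m),
          (ghErr node weight (i m) (2 * i m - 2) (y m) -
            ghErr node weight (i m - 1) (2 * i m - 2) (y m))| ≤
      (3 * c / 2) ^
          ((Finset.univ.filter (fun m : Fin l => (m : ℕ) + 1 < l ∧ 1 < i m)).card + 1) /
        (2 * Real.pi) ^
          ((((Finset.univ.filter (fun m : Fin l => (m : ℕ) + 1 < l ∧ 1 < i m)).card : ℝ) + 1) / 2) *
        Real.exp (-β *
          ((∑ m ∈ Finset.univ.filter (fun m : Fin l => (m : ℕ) + 1 < l ∧ 1 < i m), (y m) ^ 2) +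
            (y ⟨l - 1, by omega⟩) ^ 2) / 2) := by
  set G := univ.filter (fun m : Fin l => (m : ℕ) + 1 < l ∧ 1 < i m)
  set last : Fin l := ⟨l - 1, by omega⟩
  have hfactor : ∀ m ∈ G, |ghErr node weight (i m) (2 * i m - 2) (y m) -
      ghErr node weight (i m - 1) (2 * i m - 2) (y m)| ≤
        3 * c / 2 / √(2 * π) * exp (-β * y m ^ 2 / 2) := fun m hm =>
    PeanoErrBound.abs_ghErr_sub_pred_le hR hc.le (mem_filter.mp hm).2.2 (y m)
  have hlast : |-ghErr node weight (i last) (2 * i last) (y last)| ≤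
      3 * c / 2 / √(2 * π) * exp (-β * y last ^ 2 / 2) := by
    rw [abs_neg]; exact PeanoErrBound.abs_ghErr_two_mul_le hR hc.le (hi1 last) (y last)
  convert abs_mul_prod_le_pow_succ_mul_exp G hlast hfactor using 2
  · rw [div_pow _ √(2 * π), sqrt_pow_eq_rpow (by positivity), Nat.cast_succ]
  · simp only [mul_add, add_div, mul_sum, sum_div]
end
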